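/- (Lemma 5, third relation: V ⊆ V_GS.) For every v ∈ ℝ^S, if Tv ≤ v then T_GS v ≤ v; moreover, in this case T_GS v ≤ Tv componentwise. That is, V ⊆ V_GS. -/
import Mathlib


noncomputable def Tval {S : Type*} [Fintype S] {A : S → Type*}
    [∀ i, Fintype (A i)] [∀ i, Nonempty (A i)]
    (r : ∀ i, A i → ℝ) (p : ∀ i, A i → S → ℝ) (lam : ℝ) (v : S → ℝ) (i : S) : ℝ :=
  Finset.univ.sup' Finset.univ_nonempty fun a : A i =>
    r i a + lam * ∑ j, p i a j * v j

noncomputable def TGS {S : Type*} [Fintype S] [LinearOrder S] {A : S → Type*}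
    [∀ i, Fintype (A i)] [∀ i, Nonempty (A i)]
    (r : ∀ i, A i → ℝ) (p : ∀ i, A i → S → ℝ) (lam : ℝ) (v : S → ℝ) (i : S) : ℝ :=
  Finset.univ.sup' Finset.univ_nonempty fun a : A i =>
    r i a + lam * (∑ j ∈ (Finset.univ.filter fun j => j < i).attach,
        p i a j.1 * TGS r p lam v j.1)
      + lam * ∑ j ∈ Finset.univ.filter fun j => i ≤ j, p i a j * v j
termination_by (Finset.univ.filter fun j => j < i).card
decreasing_by
  have hj : j.1 < i := (Finset.mem_filter.mp j.2).2
  apply Finset.card_lt_card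
  rw [Finset.ssubset_iff_of_subset]
  · exact ⟨j.1, Finset.mem_filter.mpr ⟨Finset.mem_univ _, hj⟩, by simp⟩
  · intro x hx
    exact Finset.mem_filter.mpr ⟨Finset.mem_univ _, (Finset.mem_filter.mp hx).2.trans hj⟩

theorem V_subset_VGS {S : Type*} [Fintype S] [Nonempty S] [LinearOrder S] {A : S → Type*}
    [∀ i, Fintype (A i)] [∀ i, Nonempty (A i)]
    (r : ∀ i, A i → ℝ) (p : ∀ i, A i → S → ℝ) (lam : ℝ)
    (hp : ∀ i (a : A i) (j : S), 0 ≤ p i a j)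
    (hp1 : ∀ i (a : A i), ∑ j, p i a j = 1)
    (hlam0 : 0 ≤ lam) (hlam1 : lam < 1) :
    ∀ v : S → ℝ, (∀ i, Tval r p lam v i ≤ v i) →
      (∀ i, TGS r p lam v i ≤ v i) ∧ (∀ i, TGS r p lam v i ≤ Tval r p lam v i) := by
  intro v hv
  have key : ∀ i, TGS r p lam v i ≤ Tval r p lam v i := by
    intro i
    induction i using WellFoundedLT.induction with
    | _ i IH =>
      rw [TGS]
      apply Finset.sup'_le
      intro a _
      have h1 : ∑ j ∈ (Finset.univ.filter fun j => j < i).attach,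
          p i a j.1 * TGS r p lam v j.1 ≤
          ∑ j ∈ (Finset.univ.filter fun j => j < i).attach, p i a j.1 * v j.1 := by
        apply Finset.sum_le_sum
        intro j _
        have hj : j.1 < i := (Finset.mem_filter.mp j.2).2
        exact mul_le_mul_of_nonneg_left ((IH j.1 hj).trans (hv j.1)) (hp i a j.1)
      have h2 : ∑ j ∈ (Finset.univ.filter fun j => j < i).attach, p i a j.1 * v j.1
          = ∑ j ∈ Finset.univ.filter fun j => j < i, p i a j * v j :=
        Finset.sum_attach _ (fun j => p i a j * v j)
      have h3 : (∑ j ∈ Finset.univ.filter fun j => j < i, p i a j * v j)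
          + ∑ j ∈ Finset.univ.filter fun j => i ≤ j, p i a j * v j
          = ∑ j, p i a j * v j := by
        rw [show (Finset.univ.filter fun j => i ≤ j) =
            (Finset.univ.filter fun j => ¬ j < i) by simp [not_lt]]
        exact Finset.sum_filter_add_sum_filter_not _ _ _
      have hle : r i a + lam * (∑ j ∈ (Finset.univ.filter fun j => j < i).attach,
            p i a j.1 * TGS r p lam v j.1)
          + lam * ∑ j ∈ Finset.univ.filter fun j => i ≤ j, p i a j * v j
          ≤ r i a + lam * ∑ j, p i a j * v j := by
        rw [← h3, mul_add, ← add_assoc]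
        have := mul_le_mul_of_nonneg_left (h1.trans_eq h2) hlam0
        linarith
      exact hle.trans (Finset.le_sup' (fun a => r i a + lam * ∑ j, p i a j * v j) (Finset.mem_univ a))
  exact ⟨fun i => (key i).trans (hv i), key⟩
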